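/- arXiv:gr-qc/0110081 — 2 statements merged into one kernel-verified Lean document; each statement's English description precedes it below -/
import Mathlib

section
/- Let A, u, λ, B : ℝ → ℝ be 1-periodic functions with u twice continuously differentiable, A continuously differentiable and everywhere positive, λ continuous and everywhere positive, B continuous, and suppose u''(x) = −A(x)^{−1}A'(x)u'(x) + A(x)²u(x)λ(x) − A(x)² + B(x) for all x ∈ ℝ. Then for all x ∈ ℝ: inf_y (1 − B(y)A(y)^{−2})·λ(y)^{−1} ≤ u(x) ≤ sup_y (1 − B(y)A(y)^{−2})·λ(y)^{−1}. -/
/-!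
At a maximum point `x₀` of the periodic function `u` we have `u' x₀ = 0` and `u'' x₀ ≤ 0`. There
the equation reads `u'' = A² λ (u - g)` with `g = (1 - B A⁻²) λ⁻¹` (`lapseBound`), and `A² λ > 0`
gives `u ≤ g x₀ ≤ sup g`. The lower bound is the same argument at a minimum point.
-/

open Filter Topology

theorem IsLocalMin.deriv_deriv_eq_zero_of_isLocalMax {f : ℝ → ℝ} {x₀ : ℝ}
    (hmin : IsLocalMin f x₀) (hmax : IsLocalMax f x₀) : deriv (deriv f) x₀ = 0 := by
  have hconst : f =ᶠ[𝓝 x₀] fun _ => f x₀ := by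
    filter_upwards [hmin, hmax] with x h₁ h₂ using le_antisymm h₂ h₁
  rw [hconst.deriv.deriv_eq]
  simp

theorem IsLocalMax.deriv_deriv_nonpos {f : ℝ → ℝ} {x₀ : ℝ} (h : IsLocalMax f x₀)
    (hc : ContinuousAt f x₀) : deriv (deriv f) x₀ ≤ 0 := by
  by_contra! hpos
  have hmin := isLocalMin_of_deriv_deriv_pos hpos h.deriv_eq_zero hc
  exact hpos.ne' (hmin.deriv_deriv_eq_zero_of_isLocalMax h)

theorem IsLocalMin.deriv_deriv_nonneg {f : ℝ → ℝ} {x₀ : ℝ} (h : IsLocalMin f x₀)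
    (hc : ContinuousAt f x₀) : 0 ≤ deriv (deriv f) x₀ := by
  by_contra! hneg
  have hmax := isLocalMax_of_deriv_deriv_neg hneg h.deriv_eq_zero hc
  exact hneg.ne (h.deriv_deriv_eq_zero_of_isLocalMax hmax)

namespace Function.Periodic

variable {α : Type*} [TopologicalSpace α] [LinearOrder α] {f : ℝ → α} {c : ℝ}

theorem exists_forall_le_of_continuous [ClosedIciTopology α] (hp : Periodic f c) (hc : c ≠ 0)
    (hf : Continuous f) : ∃ x₀, ∀ x, f x ≤ f x₀ := by
  obtain ⟨_, ⟨x₀, rfl⟩, hx₀⟩ :=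
    (hp.compact_of_continuous hc hf).exists_isGreatest (Set.range_nonempty f)
  exact ⟨x₀, fun x => hx₀ ⟨x, rfl⟩⟩

theorem exists_forall_ge_of_continuous [ClosedIicTopology α] (hp : Periodic f c) (hc : c ≠ 0)
    (hf : Continuous f) : ∃ x₀, ∀ x, f x₀ ≤ f x := by
  obtain ⟨_, ⟨x₀, rfl⟩, hx₀⟩ :=
    (hp.compact_of_continuous hc hf).exists_isLeast (Set.range_nonempty f)
  exact ⟨x₀, fun x => hx₀ ⟨x, rfl⟩⟩

end Function.Periodic

noncomputable def lapseBound (A lam B : ℝ → ℝ) (y : ℝ) : ℝ :=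
  (1 - B y * ((A y) ^ 2)⁻¹) * (lam y)⁻¹

section lapseBound

variable {A lam B : ℝ → ℝ}

theorem continuous_lapseBound (hA : Continuous A) (hApos : ∀ x, 0 < A x)
    (hlam : Continuous lam) (hlampos : ∀ x, 0 < lam x) (hB : Continuous B) :
    Continuous (lapseBound A lam B) :=
  (continuous_const.sub (hB.mul ((hA.pow 2).inv₀ fun x => (pow_pos (hApos x) 2).ne'))).mul
    (hlam.inv₀ fun x => (hlampos x).ne')

theorem periodic_lapseBound {c : ℝ} (hA : Function.Periodic A c) (hlam : Function.Periodic lam c)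
    (hB : Function.Periodic B c) : Function.Periodic (lapseBound A lam B) c := fun x => by
  simp only [lapseBound, hA x, hlam x, hB x]

theorem deriv_deriv_eq_mul_sub_lapseBound {u : ℝ → ℝ} {x₀ : ℝ} (hA : A x₀ ≠ 0)
    (hlam : lam x₀ ≠ 0) (heq : deriv (deriv u) x₀ =
      -(A x₀)⁻¹ * deriv A x₀ * deriv u x₀ + (A x₀) ^ 2 * u x₀ * lam x₀ - (A x₀) ^ 2 + B x₀)
    (hcrit : deriv u x₀ = 0) :
    deriv (deriv u) x₀ = (A x₀) ^ 2 * lam x₀ * (u x₀ - lapseBound A lam B x₀) := by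
  rw [heq, hcrit, lapseBound]
  field_simp
  ring

end lapseBound

/-- Two-sided maximum/minimum principle for the inhomogeneous lapse-type equation
`u'' = -A⁻¹ A' u' + A² u λ - A² + B` on the circle: for every `x`,
`inf_y (1 - B y / A y²) (λ y)⁻¹ ≤ u x ≤ sup_y (1 - B y / A y²) (λ y)⁻¹`. -/
theorem lapse_derivative_two_sided_bound
    (A u lam B : ℝ → ℝ)
    (hAper : Function.Periodic A 1) (huper : Function.Periodic u 1)
    (hlamper : Function.Periodic lam 1) (hBper : Function.Periodic B 1)
    (hu : ContDiff ℝ 2 u) (hA : ContDiff ℝ 1 A) (hApos : ∀ x, 0 < A x)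
    (hlamcont : Continuous lam) (hlampos : ∀ x, 0 < lam x) (hBcont : Continuous B)
    (heq : ∀ x, deriv (deriv u) x =
      -(A x)⁻¹ * deriv A x * deriv u x + (A x) ^ 2 * u x * lam x - (A x) ^ 2 + B x) :
    ∀ x, (⨅ y, (1 - B y * ((A y) ^ 2)⁻¹) * (lam y)⁻¹) ≤ u x ∧
      u x ≤ ⨆ y, (1 - B y * ((A y) ^ 2)⁻¹) * (lam y)⁻¹ := by
  have hg := ((periodic_lapseBound hAper hlamper hBper).compact_of_continuous one_ne_zero
    (continuous_lapseBound hA.continuous hApos hlamcont hlampos hBcont))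
  have hu'' : ∀ x₀, deriv u x₀ = 0 →
      deriv (deriv u) x₀ = (A x₀) ^ 2 * lam x₀ * (u x₀ - lapseBound A lam B x₀) := fun x₀ =>
    deriv_deriv_eq_mul_sub_lapseBound (hApos x₀).ne' (hlampos x₀).ne' (heq x₀)
  have hcoef : ∀ x₀, 0 < (A x₀) ^ 2 * lam x₀ := fun x₀ =>
    mul_pos (pow_pos (hApos x₀) 2) (hlampos x₀)
  intro x
  constructor
  · obtain ⟨x₀, hmin⟩ := huper.exists_forall_ge_of_continuous one_ne_zero hu.continuous
    have hloc : IsLocalMin u x₀ := Eventually.of_forall hmin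
    have h := hloc.deriv_deriv_nonneg hu.continuous.continuousAt
    rw [hu'' x₀ hloc.deriv_eq_zero] at h
    calc (⨅ y, lapseBound A lam B y) ≤ lapseBound A lam B x₀ := ciInf_le hg.bddBelow x₀
      _ ≤ u x₀ := sub_nonneg.1 (nonneg_of_mul_nonneg_right h (hcoef x₀))
      _ ≤ u x := hmin x
  · obtain ⟨x₀, hmax⟩ := huper.exists_forall_le_of_continuous one_ne_zero hu.continuous
    have hloc : IsLocalMax u x₀ := Eventually.of_forall hmax
    have h := hloc.deriv_deriv_nonpos hu.continuous.continuousAt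
    rw [hu'' x₀ hloc.deriv_eq_zero] at h
    calc u x ≤ u x₀ := hmax x
      _ ≤ lapseBound A lam B x₀ := sub_nonpos.1 (nonpos_of_mul_nonpos_right h (hcoef x₀))
      _ ≤ ⨆ y, lapseBound A lam B y := le_ciSup hg.bddAbove x₀
end

section
/- Let A : ℝ → ℝ be twice continuously differentiable, 1-periodic and everywhere positive, let H, K, ρ : ℝ → ℝ be continuous and 1-periodic with ρ ≥ 0, let a > 0 be a constant and ε ∈ {1, 0, −1}, and suppose the Hamiltonian constraint (A^{1/2})''(x) = (1/8)A(x)^{5/2}(H(x)² − (1/2)(H(x)−K(x))² − K(x)² − 16πρ(x)) + (1/4)A(x)^{1/2}a^{−2}ε holds for all x ∈ ℝ. Then 2π ∫₀¹ A^{5/2}ρ dx ≤ (1/8) ∫₀¹ A^{5/2}H² dx + (1/4) ∫₀¹ A^{1/2}a^{−2} dx. -/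
open Real MeasureTheory

/-!
Integrating the Hamiltonian constraint over one period kills its left-hand side: `(A^{1/2})'` is
periodic, so the integral of its derivative vanishes. Pointwise, the constraint bounds
`2π A^{5/2} ρ + (A^{1/2})''` by `(1/8) A^{5/2} H² + (1/4) A^{1/2} a⁻²`, because the remaining
terms `-(1/16) A^{5/2} (H - K)²`, `-(1/8) A^{5/2} K²` and `(1/4) A^{1/2} a⁻² (ε - 1)` are
nonpositive; integrating this bound gives the estimate.
-/

theorem Function.Periodic.deriv {𝕜 F : Type*} [NontriviallyNormedField 𝕜] [NormedAddCommGroup F]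
    [NormedSpace 𝕜 F] {f : 𝕜 → F} {T : 𝕜} (hf : Function.Periodic f T) :
    Function.Periodic (deriv f) T := fun x => by
  rw [← deriv_comp_add_const, funext hf]

theorem integral_deriv_eq_zero_of_periodic {E : Type*} [NormedAddCommGroup E] [NormedSpace ℝ E]
    [CompleteSpace E] {φ : ℝ → E} {T : ℝ} (hφ : ContDiff ℝ 1 φ)
    (hper : Function.Periodic φ T) (a : ℝ) : ∫ x in a..a + T, deriv φ x = 0 := by
  rw [intervalIntegral.integral_deriv_eq_sub (fun x _ => hφ.differentiable one_ne_zero x)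
    ((hφ.continuous_deriv le_rfl).intervalIntegrable _ _), hper a, sub_self]

theorem integral_le_of_add_deriv_le_of_periodic {f h φ : ℝ → ℝ} {T : ℝ} (a : ℝ) (hT : 0 ≤ T)
    (hf : IntervalIntegrable f volume a (a + T)) (hh : IntervalIntegrable h volume a (a + T))
    (hφ : ContDiff ℝ 1 φ) (hper : Function.Periodic φ T) (hle : ∀ x, f x + deriv φ x ≤ h x) :
    ∫ x in a..a + T, f x ≤ ∫ x in a..a + T, h x := by
  have hφ' : IntervalIntegrable (deriv φ) volume a (a + T) :=
    (hφ.continuous_deriv le_rfl).intervalIntegrable _ _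
  calc ∫ x in a..a + T, f x = ∫ x in a..a + T, (f x + deriv φ x) := by
        rw [intervalIntegral.integral_add hf hφ', integral_deriv_eq_zero_of_periodic hφ hper a,
          add_zero]
    _ ≤ ∫ x in a..a + T, h x :=
        intervalIntegral.integral_mono_on (by linarith) (hf.add hφ') hh fun x _ => hle x

theorem hamiltonian_constraint_add_energy_le {A H K ρ a ε : ℝ} (hA : 0 ≤ A) (hε : ε ≤ 1) :
    2 * π * (A ^ ((5:ℝ)/2) * ρ) + ((1/8) * A ^ ((5:ℝ)/2) *
        (H ^ 2 - (1/2) * (H - K) ^ 2 - K ^ 2 - 16 * π * ρ) + (1/4) * A ^ ((1:ℝ)/2) * (a ^ 2)⁻¹ * ε)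
      ≤ (1/8) * (A ^ ((5:ℝ)/2) * H ^ 2) + (1/4) * (A ^ ((1:ℝ)/2) * (a ^ 2)⁻¹) := by
  have h52 : 0 ≤ A ^ ((5:ℝ)/2) := rpow_nonneg hA _
  have h12 : 0 ≤ A ^ ((1:ℝ)/2) * (a ^ 2)⁻¹ := by positivity
  nlinarith [mul_nonneg h52 (sq_nonneg (H - K)), mul_nonneg h52 (sq_nonneg K),
    mul_nonneg h12 (sub_nonneg.mpr hε)]

theorem hamiltonian_constraint_energy_estimate_general
    (A H K ρ : ℝ → ℝ) (a ε : ℝ)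
    (hA : ContDiff ℝ 2 A) (hAper : Function.Periodic A 1) (hApos : ∀ x, 0 < A x)
    (hH : Continuous H)
    (hρ : Continuous ρ)
    (hε : ε = 1 ∨ ε = 0 ∨ ε = -1)
    (heq : ∀ x, deriv (deriv (fun y => Real.sqrt (A y))) x =
      (1/8) * (A x) ^ ((5:ℝ)/2) *
        ((H x) ^ 2 - (1/2) * (H x - K x) ^ 2 - (K x) ^ 2 - 16 * π * ρ x)
      + (1/4) * (A x) ^ ((1:ℝ)/2) * (a ^ 2)⁻¹ * ε) :
    2 * π * ∫ x in (0:ℝ)..1, (A x) ^ ((5:ℝ)/2) * ρ x ≤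
      (1/8) * (∫ x in (0:ℝ)..1, (A x) ^ ((5:ℝ)/2) * (H x) ^ 2)
      + (1/4) * ∫ x in (0:ℝ)..1, (A x) ^ ((1:ℝ)/2) * (a ^ 2)⁻¹ := by
  have hsqrtA : ContDiff ℝ 2 fun y => √(A y) := hA.sqrt fun x => (hApos x).ne'
  have hsqrtAper : Function.Periodic (fun y => √(A y)) 1 := fun x => by simp only [hAper x]
  have hε1 : ε ≤ 1 := by rcases hε with rfl | rfl | rfl <;> norm_num
  have hA52 : Continuous fun x => A x ^ ((5:ℝ)/2) :=
    hA.continuous.rpow_const fun x => Or.inr (by norm_num)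
  have hA52H : Continuous fun x => A x ^ ((5:ℝ)/2) * H x ^ 2 := hA52.mul (hH.pow 2)
  have hA12 : Continuous fun x => A x ^ ((1:ℝ)/2) * (a ^ 2)⁻¹ :=
    (hA.continuous.rpow_const fun x => Or.inr (by norm_num)).mul continuous_const
  have hbound := integral_le_of_add_deriv_le_of_periodic 0 zero_le_one
    (f := fun x => 2 * π * (A x ^ ((5:ℝ)/2) * ρ x))
    (h := fun x => (1/8) * (A x ^ ((5:ℝ)/2) * H x ^ 2) + (1/4) * (A x ^ ((1:ℝ)/2) * (a ^ 2)⁻¹))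
    (((hA52.mul hρ).const_mul _).intervalIntegrable _ _)
    (((hA52H.const_mul _).add (hA12.const_mul _)).intervalIntegrable _ _)
    hsqrtA.deriv' hsqrtAper.deriv
    fun x => heq x ▸ hamiltonian_constraint_add_energy_le (hApos x).le hε1
  rwa [zero_add, intervalIntegral.integral_const_mul, intervalIntegral.integral_add
    ((hA52H.intervalIntegrable _ _).const_mul _) ((hA12.intervalIntegrable _ _).const_mul _),
    intervalIntegral.integral_const_mul, intervalIntegral.integral_const_mul] at hbound

/-- Integrated-energy estimate from the Hamiltonian constraint (Proposition 3.5):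
`2π ∫ A^{5/2} ρ ≤ (1/8) ∫ A^{5/2} H² + (1/4) ∫ A^{1/2} a⁻²` over one period. -/
theorem hamiltonian_constraint_energy_estimate
    (A H K ρ : ℝ → ℝ) (a ε : ℝ)
    (hA : ContDiff ℝ 2 A) (hAper : Function.Periodic A 1) (hApos : ∀ x, 0 < A x)
    (hH : Continuous H) (hHper : Function.Periodic H 1)
    (hK : Continuous K) (hKper : Function.Periodic K 1)
    (hρ : Continuous ρ) (hρper : Function.Periodic ρ 1) (hρnn : ∀ x, 0 ≤ ρ x)
    (ha : 0 < a) (hε : ε = 1 ∨ ε = 0 ∨ ε = -1)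
    (heq : ∀ x, deriv (deriv (fun y => Real.sqrt (A y))) x =
      (1/8) * (A x) ^ ((5:ℝ)/2) *
        ((H x) ^ 2 - (1/2) * (H x - K x) ^ 2 - (K x) ^ 2 - 16 * π * ρ x)
      + (1/4) * (A x) ^ ((1:ℝ)/2) * (a ^ 2)⁻¹ * ε) :
    2 * π * ∫ x in (0:ℝ)..1, (A x) ^ ((5:ℝ)/2) * ρ x ≤
      (1/8) * (∫ x in (0:ℝ)..1, (A x) ^ ((5:ℝ)/2) * (H x) ^ 2)
      + (1/4) * ∫ x in (0:ℝ)..1, (A x) ^ ((1:ℝ)/2) * (a ^ 2)⁻¹ :=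
  hamiltonian_constraint_energy_estimate_general A H K ρ a ε hA hAper hApos hH hρ hε heq
end
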